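/- (Lower bound on the empirical Gram matrix under well-explored covariance.) There exists an absolute constant c' > 0 such that the following holds: if φ_1, ..., φ_n are i.i.d. random vectors in R^d with ‖φ_i‖ ≤ 1 almost surely and E[φ_1 φ_1ᵀ] ⪰ b I_d for some b ∈ (0, 1], then with probability at least 1 − d·exp(−c' n b²), the empirical Gram matrix satisfies Σ_{i=1}^n φ_i φ_iᵀ ⪰ (n b / 2) I_d in the Loewner order. -/

import Mathlib

/-!
For a unit vector `u`, the variables `⟪u, φᵢ⟫²` are independent, lie in `[0, 1]` and have mean
at least `b`, so a multiplicative Chernoff bound (at `θ = log (4/3)`) makes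
`∑ᵢ ⟪u, φᵢ⟫² ≤ 5nb/8` an event of probability at most `exp (-nb/24)`. Since
`⟪u, φ⟫² ≤ ⟪v, φ⟫² + 2‖u - v‖` for vectors in the unit ball, controlling the quadratic form on a
`b/16`-net of the unit sphere controls it everywhere up to `nb/8`, giving `∑ φᵢφᵢᵀ ⪰ (nb/2) I`
outside an event of probability `(33/b)^d exp (-nb/24)`. This is at most `d exp (-nb²/4000)`
as soon as `nb ≥ 48 d log (33/b)`. Otherwise the claim is vacuous: taking traces in
`E[φφᵀ] ⪰ b I` gives `db ≤ 1`, whence `nb²/4000 ≤ log d` when `d ≥ 2`. In dimension one the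
sphere is `{±e}`, and since the quadratic form is even the single point `e` already serves as
the net.
-/

open Matrix MeasureTheory ProbabilityTheory

noncomputable section

open Metric Module Real Set WithLp
open scoped ENNReal NNReal Pointwise RealInnerProductSpace

section Net

variable {E : Type*} [NormedAddCommGroup E] [NormedSpace ℝ E] [FiniteDimensional ℝ E]

theorem Finset.card_le_of_isSeparated_of_subset_closedBall {ε : ℝ≥0} (hε : 0 < ε)
    {F : Finset E} (hF : (F : Set E) ⊆ closedBall 0 1) (hsep : IsSeparated ε (F : Set E)) :
    (F.card : ℝ) ≤ (1 + 2 / ε) ^ finrank ℝ E := by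
  borelize E
  set μ : Measure E := Measure.addHaar
  have hε2 : (0 : ℝ) < ε / 2 := by positivity
  have hdisj : (F : Set E).PairwiseDisjoint fun u => ball u (ε / 2) := by
    intro u hu v hv huv
    refine ball_disjoint_ball ?_
    have h : (ε : ℝ≥0∞) < edist u v := hsep hu hv huv
    rw [edist_nndist, ENNReal.coe_lt_coe, ← NNReal.coe_lt_coe, coe_nndist] at h
    linarith
  have hsub : (⋃ u ∈ F, ball u (ε / 2)) ⊆ ball (0 : E) (1 + ε / 2) := by
    refine iUnion₂_subset fun u hu => ball_subset_ball' ?_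
    linarith [mem_closedBall.1 (hF hu)]
  have hvol : (F.card : ℝ≥0∞) * ENNReal.ofReal ((ε / 2) ^ finrank ℝ E) * μ (ball 0 1)
      ≤ ENNReal.ofReal ((1 + ε / 2) ^ finrank ℝ E) * μ (ball 0 1) := by
    calc (F.card : ℝ≥0∞) * ENNReal.ofReal ((ε / 2) ^ finrank ℝ E) * μ (ball 0 1)
        = μ (⋃ u ∈ F, ball u (ε / 2)) := by
          rw [measure_biUnion_finset hdisj fun u _ => measurableSet_ball,
            Finset.sum_congr rfl fun u _ => Measure.addHaar_ball_of_pos μ u hε2,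
            Finset.sum_const, nsmul_eq_mul, mul_assoc]
      _ ≤ μ (ball (0 : E) (1 + ε / 2)) := measure_mono hsub
      _ = _ := Measure.addHaar_ball_of_pos μ 0 (by positivity)
  rw [ENNReal.mul_le_mul_iff_left (measure_ball_pos μ 0 one_pos).ne' measure_ball_lt_top.ne,
    ← ENNReal.ofReal_natCast, ← ENNReal.ofReal_mul (by positivity),
    ENNReal.ofReal_le_ofReal_iff (by positivity), ← le_div_iff₀ (by positivity), ← div_pow]
    at hvol
  refine hvol.trans_eq (congrArg (· ^ finrank ℝ E) ?_)
  field_simp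
  ring

theorem exists_finset_isCover_sphere {ε : ℝ≥0} (hε : 0 < ε) :
    ∃ T : Finset E, (T : Set E) ⊆ sphere 0 1 ∧ IsCover ε (sphere 0 1) (T : Set E) ∧
      (T.card : ℝ) ≤ (1 + 2 / ε) ^ finrank ℝ E := by
  set N := ⌊(1 + 2 / (ε : ℝ)) ^ finrank ℝ E⌋₊
  have hcard : ∀ C ⊆ sphere (0 : E) 1, IsSeparated ε C → C.encard ≤ N := by
    intro C hC hsep
    by_contra! hlt
    obtain ⟨t, htC, ht⟩ := exists_subset_encard_eq (Order.add_one_le_of_lt hlt)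
    have htfin : t.Finite := finite_of_encard_eq_coe ht
    have := Nat.le_floor (Finset.card_le_of_isSeparated_of_subset_closedBall hε
      (F := htfin.toFinset) (by simpa using htC.trans (hC.trans sphere_subset_closedBall))
      (by simpa using hsep.subset htC))
    rw [htfin.encard_eq_coe_toFinset_card] at ht
    norm_cast at ht
    omega
  have hpack : packingNumber ε (sphere (0 : E) 1) ≠ ⊤ :=
    ne_top_of_le_ne_top (ENat.natCast_ne_top N) (iSup₂_le fun C hC => iSup_le (hcard C hC))
  have hfin : (maximalSeparatedSet ε (sphere (0 : E) 1)).Finite :=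
    encard_ne_top_iff.1 (encard_maximalSeparatedSet hpack ▸ hpack)
  refine ⟨hfin.toFinset, by simpa using maximalSeparatedSet_subset,
    by simpa using isCover_maximalSeparatedSet hpack, ?_⟩
  exact Finset.card_le_of_isSeparated_of_subset_closedBall hε
    (by simpa using maximalSeparatedSet_subset.trans sphere_subset_closedBall)
    (by simpa using isSeparated_maximalSeparatedSet)

end Net

section QuadraticForm

variable {E : Type*} [NormedAddCommGroup E] [InnerProductSpace ℝ E]

theorem sq_inner_le_sq_inner_add {u v ψ : E} (hu : ‖u‖ ≤ 1) (hv : ‖v‖ ≤ 1) (hψ : ‖ψ‖ ≤ 1) :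
    ⟪u, ψ⟫ ^ 2 ≤ ⟪v, ψ⟫ ^ 2 + 2 * ‖u - v‖ := by
  have hdiff : |⟪u - v, ψ⟫| ≤ ‖u - v‖ :=
    (abs_real_inner_le_norm _ _).trans (mul_le_of_le_one_right (norm_nonneg _) hψ)
  have hsum : |⟪u + v, ψ⟫| ≤ 2 :=
    (abs_real_inner_le_norm _ _).trans (by nlinarith [norm_add_le u v, norm_nonneg (u + v)])
  calc ⟪u, ψ⟫ ^ 2 = ⟪v, ψ⟫ ^ 2 + ⟪u - v, ψ⟫ * ⟪u + v, ψ⟫ := by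
        rw [inner_sub_left, inner_add_left]; ring
    _ ≤ ⟪v, ψ⟫ ^ 2 + |⟪u - v, ψ⟫| * |⟪u + v, ψ⟫| := by rw [← abs_mul]; gcongr; exact le_abs_self _
    _ ≤ ⟪v, ψ⟫ ^ 2 + ‖u - v‖ * 2 := by gcongr
    _ = ⟪v, ψ⟫ ^ 2 + 2 * ‖u - v‖ := by ring

variable {ι : Type*} [Fintype ι] {ψ : ι → E}

theorem le_sum_sq_inner_of_isCover (hψ : ∀ i, ‖ψ i‖ ≤ 1) {T : Set E} (hT : T ⊆ sphere 0 1)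
    {ε : ℝ≥0} (hcover : IsCover ε (sphere 0 1) (T ∪ -T)) {a : ℝ}
    (ha : ∀ u ∈ T, a ≤ ∑ i, ⟪u, ψ i⟫ ^ 2) {v : E} (hv : v ∈ sphere 0 1) :
    a - 2 * Fintype.card ι * ε ≤ ∑ i, ⟪v, ψ i⟫ ^ 2 := by
  obtain ⟨u, hu, hvu⟩ := mem_iUnion₂.1 (hcover.subset_iUnion_closedBall hv)
  obtain ⟨w, hwT, hsign⟩ : ∃ w ∈ T, u = w ∨ u = -w := by
    rcases hu with hu | hu
    exacts [⟨u, hu, .inl rfl⟩, ⟨-u, hu, .inr (neg_neg u).symm⟩]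
  have hu1 : ‖u‖ = 1 := by rcases hsign with rfl | rfl <;> simpa using hT hwT
  have hsq : ∑ i, ⟪u, ψ i⟫ ^ 2 = ∑ i, ⟪w, ψ i⟫ ^ 2 := by
    rcases hsign with rfl | rfl <;> simp only [inner_neg_left, neg_sq]
  have hclose : ∑ i, ⟪u, ψ i⟫ ^ 2 ≤ ∑ i, (⟪v, ψ i⟫ ^ 2 + 2 * ε) := by
    refine Finset.sum_le_sum fun i _ => (sq_inner_le_sq_inner_add hu1.le
      (mem_sphere_zero_iff_norm.1 hv).le (hψ i)).trans ?_
    rw [norm_sub_rev, ← dist_eq_norm]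
    gcongr
    exact hvu
  rw [Finset.sum_add_distrib, Finset.sum_const, Finset.card_univ, nsmul_eq_mul] at hclose
  linarith [ha w hwT]

theorem mul_norm_sq_le_sum_sq_inner_of_isCover (hψ : ∀ i, ‖ψ i‖ ≤ 1) {T : Set E}
    (hT : T ⊆ sphere 0 1) {ε : ℝ≥0} (hcover : IsCover ε (sphere 0 1) (T ∪ -T)) {a : ℝ}
    (ha : ∀ u ∈ T, a ≤ ∑ i, ⟪u, ψ i⟫ ^ 2) (x : E) :
    (a - 2 * Fintype.card ι * ε) * ‖x‖ ^ 2 ≤ ∑ i, ⟪x, ψ i⟫ ^ 2 := by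
  rcases eq_or_ne x 0 with rfl | hx
  · simp
  have hunit := le_sum_sq_inner_of_isCover hψ hT hcover ha
    (v := ‖x‖⁻¹ • x) (by simp [norm_smul, hx])
  simp only [real_inner_smul_left, mul_pow, ← Finset.mul_sum, inv_pow] at hunit
  rw [le_inv_mul_iff₀ (by positivity)] at hunit
  linarith

end QuadraticForm

section Chernoff

variable {Ω : Type*} [MeasurableSpace Ω] {P : Measure Ω} [IsProbabilityMeasure P]

theorem exp_mul_le_one_add_mul_of_mem_Icc (t : ℝ) {x : ℝ} (hx : x ∈ Icc (0 : ℝ) 1) :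
    exp (t * x) ≤ 1 + (exp t - 1) * x := by
  have h := convexOn_exp.2 (mem_univ 0) (mem_univ t) (by linarith [hx.2] : 0 ≤ 1 - x) hx.1
    (by ring)
  simp only [smul_eq_mul, mul_zero, zero_add, exp_zero, mul_one] at h
  rw [mul_comm]
  linarith

theorem mgf_le_exp_of_mem_Icc {X : Ω → ℝ} (hX : Measurable X)
    (hbdd : ∀ᵐ ω ∂P, X ω ∈ Icc 0 1) (t : ℝ) :
    mgf X P t ≤ exp ((exp t - 1) * P[X]) := by
  have hint : Integrable X P := .of_mem_Icc 0 1 hX.aemeasurable hbdd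
  calc mgf X P t ≤ ∫ ω, 1 + (exp t - 1) * X ω ∂P :=
        integral_mono_of_nonneg (.of_forall fun _ => (exp_pos _).le)
          ((integrable_const 1).add (hint.const_mul _))
          (hbdd.mono fun ω hω => exp_mul_le_one_add_mul_of_mem_Icc t hω)
    _ = 1 + (exp t - 1) * P[X] := by
        rw [integral_add (integrable_const 1) (hint.const_mul _), integral_const_mul]
        simp
    _ ≤ exp ((exp t - 1) * P[X]) := by linarith [add_one_le_exp ((exp t - 1) * P[X])]

theorem ProbabilityTheory.iIndepFun.measureReal_sum_le_le_exp {ι : Type*} [Fintype ι]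
    {X : ι → Ω → ℝ} (hind : iIndepFun X P) (hX : ∀ i, Measurable (X i))
    (hbdd : ∀ i, ∀ᵐ ω ∂P, X i ω ∈ Icc 0 1) {θ : ℝ} (hθ : 0 ≤ θ) (a : ℝ) :
    P.real {ω | ∑ i, X i ω ≤ a} ≤ exp (θ * a - (1 - exp (-θ)) * ∑ i, P[X i]) := by
  have hint : Integrable (fun ω => exp (-θ * (∑ i, X i) ω)) P :=
    hind.integrable_exp_mul_sum hX fun i _ => .of_mem_Icc 0 1 (by fun_prop) <|
      (hbdd i).mono fun ω hω => ⟨(exp_pos _).le, exp_le_one_iff.2 (by nlinarith [hω.1])⟩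
  calc P.real {ω | ∑ i, X i ω ≤ a}
      ≤ exp (- -θ * a) * mgf (∑ i, X i) P (-θ) := by
        simpa only [Finset.sum_apply] using measure_le_le_exp_mul_mgf a (neg_nonpos.2 hθ) hint
    _ ≤ exp (θ * a) * ∏ i, exp ((exp (-θ) - 1) * P[X i]) := by
        rw [neg_neg, hind.mgf_sum hX]
        gcongr with i
        · exact fun i _ => mgf_nonneg
        · exact mgf_le_exp_of_mem_Icc (hX i) (hbdd i) _
    _ = exp (θ * a - (1 - exp (-θ)) * ∑ i, P[X i]) := by
        rw [← exp_sum, ← exp_add, ← Finset.mul_sum]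
        ring_nf

theorem ProbabilityTheory.iIndepFun.measureReal_sum_le_le_exp_of_le_integral {ι : Type*}
    [Fintype ι] {X : ι → Ω → ℝ} (hind : iIndepFun X P) (hX : ∀ i, Measurable (X i))
    (hbdd : ∀ i, ∀ᵐ ω ∂P, X i ω ∈ Icc 0 1) {b : ℝ} (hb : 0 ≤ b) (hmean : ∀ i, b ≤ P[X i]) :
    P.real {ω | ∑ i, X i ω ≤ 5 * (Fintype.card ι * b) / 8} ≤
      exp (-(Fintype.card ι * b / 24)) := by
  have hθ : log (4 / 3) ≤ 1 / 3 := by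
    linarith [log_le_sub_one_of_pos (by norm_num : (0 : ℝ) < 4 / 3)]
  have hexp : exp (-log (4 / 3)) = 3 / 4 := by rw [exp_neg, exp_log (by norm_num)]; norm_num
  have hsum : Fintype.card ι * b ≤ ∑ i, P[X i] := by
    simpa using Finset.sum_le_sum fun i (_ : i ∈ Finset.univ) => hmean i
  refine (hind.measureReal_sum_le_le_exp hX hbdd
    (log_nonneg (by norm_num : (1 : ℝ) ≤ 4 / 3)) _).trans ?_
  rw [hexp]
  gcongr
  nlinarith [mul_nonneg (Nat.cast_nonneg _ : (0 : ℝ) ≤ Fintype.card ι) hb]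

end Chernoff

section Gram

variable {n : Type*} [Fintype n] [DecidableEq n]

theorem dotProduct_sum_vecMulVec_sub_smul_one_mulVec {ι : Type*} [Fintype ι] (ψ : ι → n → ℝ)
    (c : ℝ) (x : n → ℝ) :
    x ⬝ᵥ ((∑ i, vecMulVec (ψ i) (ψ i) - c • 1) *ᵥ x) = ∑ i, (ψ i ⬝ᵥ x) ^ 2 - c * (x ⬝ᵥ x) := by
  simp only [sub_mulVec, sum_mulVec, vecMulVec_mulVec, smul_mulVec, one_mulVec, dotProduct_sub,
    dotProduct_sum, dotProduct_smul, op_smul_eq_smul, smul_eq_mul, dotProduct_comm x (ψ _), sq]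

theorem posSemidef_sum_vecMulVec_sub_smul_one {ι : Type*} [Fintype ι] (ψ : ι → n → ℝ) {c : ℝ}
    (h : ∀ x, c * (x ⬝ᵥ x) ≤ ∑ i, (ψ i ⬝ᵥ x) ^ 2) :
    (∑ i, vecMulVec (ψ i) (ψ i) - c • 1).PosSemidef := by
  refine .of_dotProduct_mulVec_nonneg ?_ fun x => ?_
  · refine (posSemidef_sum _ fun i _ => ?_).isHermitian.sub (isHermitian_one.smul (.all c))
    simpa using posSemidef_vecMulVec_self_star (ψ i)
  · rw [star_trivial, dotProduct_sum_vecMulVec_sub_smul_one_mulVec, sub_nonneg]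
    exact h x

end Gram

section SecondMoment

variable {Ω : Type*} [MeasurableSpace Ω] {P : Measure Ω} {n : Type*} [Fintype n] {f : Ω → n → ℝ}

def secondMomentMatrix (P : Measure Ω) (f : Ω → n → ℝ) : Matrix n n ℝ :=
  of fun l l' => ∫ ω, f ω l * f ω l' ∂P

theorem integrable_mul_of_sum_sq_le_one [IsFiniteMeasure P] (hf : Measurable f)
    (hbd : ∀ᵐ ω ∂P, ∑ l, f ω l ^ 2 ≤ 1) (l l' : n) :
    Integrable (fun ω => f ω l * f ω l') P := by
  have hcoord : ∀ᵐ ω ∂P, ∀ l, |f ω l| ≤ 1 := hbd.mono fun ω hω l =>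
    (sq_le_one_iff_abs_le_one _).1 <|
      (Finset.single_le_sum (fun l _ => sq_nonneg (f ω l)) (Finset.mem_univ l)).trans hω
  refine .of_mem_Icc (-1) 1 (by fun_prop) (hcoord.mono fun ω hω => abs_le.1 ?_)
  rw [abs_mul]
  exact mul_le_one₀ (hω l) (abs_nonneg _) (hω l')

theorem dotProduct_secondMomentMatrix_mulVec
    (hint : ∀ l l', Integrable (fun ω => f ω l * f ω l') P) (u : n → ℝ) :
    u ⬝ᵥ (secondMomentMatrix P f *ᵥ u) = ∫ ω, (f ω ⬝ᵥ u) ^ 2 ∂P := by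
  calc u ⬝ᵥ (secondMomentMatrix P f *ᵥ u)
      = ∑ l, ∑ l', ∫ ω, u l * u l' * (f ω l * f ω l') ∂P := by
        simp only [secondMomentMatrix, dotProduct, mulVec, of_apply, Finset.mul_sum,
          integral_const_mul]
        exact Finset.sum_congr rfl fun l _ => Finset.sum_congr rfl fun l' _ => by ring
    _ = ∫ ω, ∑ l, ∑ l', u l * u l' * (f ω l * f ω l') ∂P := by
        rw [integral_finsetSum _ fun l _ => integrable_finsetSum _ fun l' _ =>
          (hint l l').const_mul _]
        exact Finset.sum_congr rfl fun l _ =>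
          (integral_finsetSum _ fun l' _ => (hint l l').const_mul _).symm
    _ = ∫ ω, (f ω ⬝ᵥ u) ^ 2 ∂P := by
        congr 1 with ω
        simp only [dotProduct, sq, Finset.sum_mul, Finset.mul_sum]
        exact Finset.sum_congr rfl fun l _ => Finset.sum_congr rfl fun l' _ => by ring

variable [DecidableEq n]

theorem mul_dotProduct_self_le_integral_sq_of_posSemidef
    (hint : ∀ l l', Integrable (fun ω => f ω l * f ω l') P) {b : ℝ}
    (hpsd : (secondMomentMatrix P f - b • 1).PosSemidef) (u : n → ℝ) :
    b * (u ⬝ᵥ u) ≤ ∫ ω, (f ω ⬝ᵥ u) ^ 2 ∂P := by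
  have := hpsd.dotProduct_mulVec_nonneg u
  rwa [star_trivial, sub_mulVec, dotProduct_sub, smul_mulVec, one_mulVec, dotProduct_smul,
    smul_eq_mul, dotProduct_secondMomentMatrix_mulVec hint, sub_nonneg] at this

theorem card_mul_le_one_of_posSemidef [IsProbabilityMeasure P] (hf : Measurable f)
    (hbd : ∀ᵐ ω ∂P, ∑ l, f ω l ^ 2 ≤ 1) {b : ℝ}
    (hpsd : (secondMomentMatrix P f - b • 1).PosSemidef) :
    Fintype.card n * b ≤ 1 := by
  have hint : Integrable (fun ω => ∑ l, f ω l ^ 2) P := integrable_finsetSum _ fun l _ => by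
    simpa only [sq] using integrable_mul_of_sum_sq_le_one hf hbd l l
  have htrace := hpsd.trace_nonneg
  rw [trace_sub, trace_smul, trace_one, smul_eq_mul, sub_nonneg] at htrace
  calc Fintype.card n * b ≤ trace (secondMomentMatrix P f) := by linarith
    _ = ∫ ω, ∑ l, f ω l ^ 2 ∂P := by
        simp only [secondMomentMatrix, trace, diag_apply, of_apply, sq]
        exact (integral_finsetSum _ fun l _ => integrable_mul_of_sum_sq_le_one hf hbd l l).symm
    _ ≤ ∫ _, 1 ∂P := integral_mono_ae hint (integrable_const 1) hbd
    _ = 1 := by simp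

end SecondMoment

theorem EuclideanSpace.norm_toLp_le_one_iff {n : Type*} [Fintype n] {x : n → ℝ} :
    ‖toLp 2 x‖ ≤ 1 ↔ ∑ l, x l ^ 2 ≤ 1 := by
  rw [← sq_le_one_iff₀ (norm_nonneg _), EuclideanSpace.real_norm_sq_eq]

section GramLowerBound

variable {Ω : Type*} [MeasurableSpace Ω] {P : Measure Ω} [IsProbabilityMeasure P]

theorem measure_sum_sq_inner_le_le_exp {ι n : Type*} [Fintype ι] [Fintype n] [DecidableEq n]
    {φ : ι → Ω → n → ℝ} (hφ : ∀ i, Measurable (φ i)) (hind : iIndepFun φ P)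
    (hbd : ∀ i, ∀ᵐ ω ∂P, ∑ l, φ i ω l ^ 2 ≤ 1) {b : ℝ} (hb : 0 ≤ b)
    (hcov : ∀ i, (secondMomentMatrix P (φ i) - b • 1).PosSemidef)
    {u : EuclideanSpace ℝ n} (hu : ‖u‖ = 1) :
    P {ω | ∑ i, ⟪u, toLp 2 (φ i ω)⟫ ^ 2 ≤ 5 * (Fintype.card ι * b) / 8} ≤
      ENNReal.ofReal (exp (-(Fintype.card ι * b / 24))) := by
  have hinner : ∀ y : n → ℝ, ⟪u, toLp 2 y⟫ = y ⬝ᵥ ofLp u := fun y => by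
    simp [EuclideanSpace.inner_eq_star_dotProduct]
  have hg : Measurable fun y : n → ℝ => ⟪u, toLp 2 y⟫ ^ 2 := by
    simp only [hinner]
    fun_prop
  have hbdd : ∀ i, ∀ᵐ ω ∂P, ⟪u, toLp 2 (φ i ω)⟫ ^ 2 ∈ Icc 0 1 := fun i =>
    (hbd i).mono fun ω hω => by
      refine ⟨sq_nonneg _, (sq_le_one_iff_abs_le_one _).2 ?_⟩
      refine (abs_real_inner_le_norm _ _).trans ?_
      rw [hu, one_mul]
      exact EuclideanSpace.norm_toLp_le_one_iff.2 hω
  have hmean : ∀ i, b ≤ ∫ ω, ⟪u, toLp 2 (φ i ω)⟫ ^ 2 ∂P := fun i => by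
    have hu' : ofLp u ⬝ᵥ ofLp u = 1 := by
      rw [← hinner, toLp_ofLp, real_inner_self_eq_norm_sq, hu, one_pow]
    simpa only [hinner, hu', mul_one] using mul_dotProduct_self_le_integral_sq_of_posSemidef
      (integrable_mul_of_sum_sq_le_one (hφ i) (hbd i)) (hcov i) (ofLp u)
  rw [← ofReal_measureReal]
  exact ENNReal.ofReal_le_ofReal <|
    (hind.comp _ fun _ => hg).measureReal_sum_le_le_exp_of_le_integral
      (fun i => hg.comp (hφ i)) hbdd hb hmean

theorem ofReal_one_sub_le_measure_posSemidef {ι : Type*} [Fintype ι] {d : ℕ}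
    {φ : ι → Ω → Fin d → ℝ} (hnorm : ∀ i, ∀ᵐ ω ∂P, ‖toLp 2 (φ i ω)‖ ≤ 1)
    {T : Finset (EuclideanSpace ℝ (Fin d))}
    (hT : (T : Set (EuclideanSpace ℝ (Fin d))) ⊆ sphere 0 1) {ε : ℝ≥0}
    (hcover : IsCover ε (sphere 0 1) ((T : Set (EuclideanSpace ℝ (Fin d))) ∪ -T))
    {a q : ℝ} (hq : 0 ≤ q)
    (hdir : ∀ u ∈ T, P {ω | ∑ i, ⟪u, toLp 2 (φ i ω)⟫ ^ 2 ≤ a} ≤ ENNReal.ofReal q) :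
    ENNReal.ofReal (1 - T.card * q) ≤
      P {ω | (∑ i, vecMulVec (φ i ω) (φ i ω) - (a - 2 * Fintype.card ι * ε) • 1).PosSemidef} := by
  set bad := ⋃ u ∈ T, {ω | ∑ i, ⟪u, toLp 2 (φ i ω)⟫ ^ 2 ≤ a}
  have hbad : P bad ≤ ENNReal.ofReal (T.card * q) := by
    refine (measure_biUnion_finset_le T _).trans ((Finset.sum_le_sum hdir).trans ?_)
    rw [Finset.sum_const, nsmul_eq_mul, ENNReal.ofReal_mul (Nat.cast_nonneg _),
      ENNReal.ofReal_natCast]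
  have hgood : univ \ bad ≤ᵐ[P]
      {ω | (∑ i, vecMulVec (φ i ω) (φ i ω) - (a - 2 * Fintype.card ι * ε) • 1).PosSemidef} := by
    filter_upwards [ae_all_iff.2 hnorm] with ω hω ⟨_, hgood⟩
    refine posSemidef_sum_vecMulVec_sub_smul_one _ fun x => ?_
    have := mul_norm_sq_le_sum_sq_inner_of_isCover hω hT hcover
      (fun u hu => le_of_not_ge fun h => hgood (mem_biUnion hu h)) (toLp 2 x)
    rw [← real_inner_self_eq_norm_sq] at this
    simpa only [EuclideanSpace.inner_toLp_toLp, star_trivial] using this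
  calc ENNReal.ofReal (1 - T.card * q) ≤ 1 - P bad := by
        rw [ENNReal.ofReal_sub _ (by positivity), ENNReal.ofReal_one]
        exact tsub_le_tsub_left hbad 1
    _ ≤ P (univ \ bad) := by simpa using le_measure_sdiff (μ := P) (s₁ := univ) (s₂ := bad)
    _ ≤ _ := measure_mono_ae hgood

end GramLowerBound

theorem mul_mul_log_div_le {d : ℕ} (hd : 1 ≤ d) {b : ℝ} (hb : 0 < b) (hdb : d * b ≤ 1) :
    d * b * log (33 / b) ≤ 33 + log d := by
  have hd' : (1 : ℝ) ≤ d := by exact_mod_cast hd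
  have hA : 0 < (d : ℝ) * b := by positivity
  have hsplit : log (33 / b) = log 33 + log d - log (d * b) := by
    rw [log_div (by norm_num) hb.ne', log_mul (by positivity) hb.ne']
    ring
  have h33 : log 33 ≤ 32 := by linarith [log_le_sub_one_of_pos (by norm_num : (0 : ℝ) < 33)]
  have hentropy : -(d * b * log (d * b)) ≤ 1 := by
    have := mul_le_mul_of_nonneg_left (log_le_sub_one_of_pos (inv_pos.2 hA)) hA.le
    rw [log_inv, mul_sub, mul_inv_cancel₀ hA.ne'] at this
    linarith
  rw [hsplit]
  nlinarith [log_nonneg (by norm_num : (1 : ℝ) ≤ 33), log_nonneg hd']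

theorem one_le_mul_exp_of_lt {d : ℕ} (hd : 2 ≤ d) {b : ℝ} (hb : 0 < b) (hdb : d * b ≤ 1) {n : ℝ}
    (h : n * b < 48 * (d * log (33 / b))) :
    1 ≤ d * exp (-(1 / 4000) * n * b ^ 2) := by
  have hd' : (2 : ℝ) ≤ d := by exact_mod_cast hd
  have hlog : 1 / 2 < log d :=
    (log_two_gt_d9.trans_le' (by norm_num)).trans_le (log_le_log (by norm_num) hd')
  have hnb : n * b ^ 2 < 48 * (33 + log d) := by
    calc n * b ^ 2 = n * b * b := by ring
      _ < 48 * (d * log (33 / b)) * b := by gcongr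
      _ = 48 * (d * b * log (33 / b)) := by ring
      _ ≤ 48 * (33 + log d) := by gcongr; exact mul_mul_log_div_le (by omega) hb hdb
  calc (1 : ℝ) = d * exp (-log d) := by
        rw [exp_neg, exp_log (by positivity), mul_inv_cancel₀ (by positivity)]
    _ ≤ d * exp (-(1 / 4000) * n * b ^ 2) := by
        gcongr
        nlinarith

theorem pow_mul_exp_le_exp_of_le {d : ℕ} {b : ℝ} (hb : 0 < b) (hb1 : b ≤ 1) {n : ℝ}
    (hn : 0 ≤ n) (h : 48 * (d * log (33 / b)) ≤ n * b) :
    (33 / b) ^ d * exp (-(n * b / 24)) ≤ exp (-(1 / 4000) * n * b ^ 2) := by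
  rw [← exp_log (pow_pos (by positivity : 0 < 33 / b) d), log_pow, ← exp_add]
  gcongr
  nlinarith [mul_le_mul_of_nonneg_left hb1 (mul_nonneg hn hb.le)]

theorem EuclideanSpace.sphere_zero_one_fin_one_subset :
    sphere (0 : EuclideanSpace ℝ (Fin 1)) 1 ⊆
      {EuclideanSpace.single 0 1} ∪ -{EuclideanSpace.single 0 1} := by
  intro v hv
  have hv0 : v 0 ^ 2 = 1 ^ 2 := by
    simpa [mem_sphere_zero_iff_norm.1 hv] using (EuclideanSpace.real_norm_sq_eq v).symm
  rcases eq_or_eq_neg_of_sq_eq_sq _ _ hv0 with h | h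
  · left
    ext i
    fin_cases i
    simp [h]
  · right
    rw [mem_neg, mem_singleton_iff]
    ext i
    fin_cases i
    simp [h]

-- `ε = b/16` turns the Chernoff threshold `5nb/8` into `nb/2`, and `1 + 2/ε ≤ 33/b`.
theorem exists_isCover_card_mul_exp_le_or {d : ℕ} {b : ℝ} (hb : 0 < b) (hb1 : b ≤ 1)
    (hdb : d * b ≤ 1) {n : ℝ} (hn : 0 ≤ n) :
    (∃ T : Finset (EuclideanSpace ℝ (Fin d)), (T : Set (EuclideanSpace ℝ (Fin d))) ⊆ sphere 0 1 ∧
      IsCover (b / 16).toNNReal (sphere 0 1) ((T : Set (EuclideanSpace ℝ (Fin d))) ∪ -T) ∧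
      T.card * exp (-(n * b / 24)) ≤ d * exp (-(1 / 4000) * n * b ^ 2)) ∨
    1 ≤ d * exp (-(1 / 4000) * n * b ^ 2) := by
  obtain rfl | rfl | hd : d = 0 ∨ d = 1 ∨ 2 ≤ d := by omega
  · exact .inl ⟨∅, by simp, by simp [sphere_eq_empty_of_subsingleton], by simp⟩
  · refine .inl ⟨{EuclideanSpace.single 0 1}, by simp, ?_, ?_⟩
    · simpa using (IsCover.refl _ _).anti EuclideanSpace.sphere_zero_one_fin_one_subset
    · simpa using pow_mul_exp_le_exp_of_le (d := 0) hb hb1 hn (by simp; positivity)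
  by_cases h : 48 * (d * log (33 / b)) ≤ n * b
  · obtain ⟨T, hT, hcover, hcard⟩ := exists_finset_isCover_sphere
      (E := EuclideanSpace ℝ (Fin d)) (ε := (b / 16).toNNReal) (by positivity)
    refine .inl ⟨T, hT, hcover.mono subset_union_left, ?_⟩
    rw [finrank_euclideanSpace_fin, Real.coe_toNNReal _ (by positivity)] at hcard
    have h33 : 1 + 2 / (b / 16) ≤ 33 / b := by
      rw [div_div_eq_mul_div, le_div_iff₀ hb]
      field_simp
      linarith
    calc T.card * exp (-(n * b / 24)) ≤ (33 / b) ^ d * exp (-(n * b / 24)) := by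
          gcongr
          exact hcard.trans (pow_le_pow_left₀ (by positivity) h33 d)
      _ ≤ exp (-(1 / 4000) * n * b ^ 2) := pow_mul_exp_le_exp_of_le hb hb1 hn h
      _ ≤ d * exp (-(1 / 4000) * n * b ^ 2) :=
          le_mul_of_one_le_left (exp_pos _).le (by exact_mod_cast (by omega : 1 ≤ d))
  · exact .inr (one_le_mul_exp_of_lt hd hb hdb (not_le.1 h))

/-- There is an absolute constant `c' > 0` such that: if
`φ_1, …, φ_n` are i.i.d. random vectors in `ℝ^d` with `‖φ_i‖ ≤ 1` almost surely and
`E[φ_1 φ_1ᵀ] ⪰ b I_d` for some `b ∈ (0,1]`, then with probability at least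
`1 − d·exp(−c' n b²)`, the empirical Gram matrix satisfies
`Σ_{i=1}^n φ_i φ_iᵀ ⪰ (n b / 2) I_d`. -/
theorem empirical_gram_lower_bound :
    ∃ c' : ℝ, 0 < c' ∧
      ∀ (d n : ℕ), 0 < n →
      ∀ (Ω : Type) [MeasurableSpace Ω] (P : Measure Ω), IsProbabilityMeasure P →
      ∀ (b : ℝ), 0 < b → b ≤ 1 →
      ∀ φ : Fin n → Ω → Fin d → ℝ,
        (∀ i, Measurable (φ i)) →
        -- independent
        iIndepFun φ P →
        -- identically distributed
        (∀ i j : Fin n, Measure.map (φ i) P = Measure.map (φ j) P) →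
        -- `‖φ_i‖ ≤ 1` almost surely
        (∀ i, ∀ᵐ ω ∂P, ∑ l, φ i ω l ^ 2 ≤ 1) →
        -- `E[φ_1 φ_1ᵀ] ⪰ b I_d`
        (∀ i, Matrix.PosSemidef
          ((Matrix.of fun l l' => ∫ ω, φ i ω l * φ i ω l' ∂P)
            - b • (1 : Matrix (Fin d) (Fin d) ℝ))) →
        ENNReal.ofReal (1 - d * Real.exp (-c' * n * b ^ 2)) ≤
          P {ω | Matrix.PosSemidef
            ((∑ i, Matrix.vecMulVec (φ i ω) (φ i ω))
              - ((n * b / 2 : ℝ)) • (1 : Matrix (Fin d) (Fin d) ℝ))} := by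
  refine ⟨1 / 4000, by norm_num, ?_⟩
  intro d n hn Ω _ P _ b hb hb1 φ hφ hind _ hbd hcov
  have hdb : (d : ℝ) * b ≤ 1 := by
    simpa using card_mul_le_one_of_posSemidef (hφ ⟨0, hn⟩) (hbd _) (hcov _)
  rcases exists_isCover_card_mul_exp_le_or hb hb1 hdb n.cast_nonneg with
    ⟨T, hT, hcover, hcard⟩ | hD
  · have hshift : 5 * (n * b) / 8 - 2 * n * ((b / 16).toNNReal : ℝ) = n * b / 2 := by
      rw [Real.coe_toNNReal _ (by positivity)]
      ring
    have := ofReal_one_sub_le_measure_posSemidef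
      (fun i => (hbd i).mono fun ω => EuclideanSpace.norm_toLp_le_one_iff.2) hT hcover
      (exp_pos _).le fun u hu => by
        simpa using measure_sum_sq_inner_le_le_exp hφ hind hbd hb.le hcov
          (mem_sphere_zero_iff_norm.1 (hT hu))
    simp only [Fintype.card_fin, hshift] at this
    exact (ENNReal.ofReal_le_ofReal (by linarith)).trans this
  · rw [ENNReal.ofReal_eq_zero.2 (by linarith)]
    exact zero_le

end
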